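/- Soundness of the Bind rule: if x does not occur in t, then the clause C' ∨ x ≉ t entails the clause C'σ where σ = {x → t}: every interpretation and valuation satisfying C' ∨ x ≉ t for all valuations satisfies C'σ for all valuations. -/

import Mathlib

inductive Tm (V F : Type) : Type
  | var : V → Tm V F
  | app : F → List (Tm V F) → Tm V F

def Tm.subst {V W F : Type} (σ : V → Tm W F) : Tm V F → Tm W F
  | .var x => σ x
  | .app f ts => .app f (ts.attach.map fun t => t.1.subst σ)
decreasing_by have := List.sizeOf_lt_of_mem t.2; simp [Tm.app.sizeOf_spec]; omega

structure Interp (F : Type) where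
  U : Type
  ne : Nonempty U
  fn : F → List U → U

def Tm.eval {V F} (M : Interp F) (ξ : V → M.U) : Tm V F → M.U
  | .var x => ξ x
  | .app f ts => M.fn f (ts.attach.map fun t => t.1.eval M ξ)
decreasing_by have := List.sizeOf_lt_of_mem t.2; simp [Tm.app.sizeOf_spec]; omega

structure Lit (V F : Type) where
  pos : Bool
  lhs : Tm V F
  rhs : Tm V F

def Lit.subst {V W F} (σ : V → Tm W F) (L : Lit V F) : Lit W F :=
  ⟨L.pos, L.lhs.subst σ, L.rhs.subst σ⟩

def Lit.holds {V F} (M : Interp F) (ξ : V → M.U) (L : Lit V F) : Prop :=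
  match L.pos with
  | true => L.lhs.eval M ξ = L.rhs.eval M ξ
  | false => L.lhs.eval M ξ ≠ L.rhs.eval M ξ

abbrev Clause (V F : Type) := List (Lit V F)

def Clause.holds {V F} (M : Interp F) (ξ : V → M.U) (C : Clause V F) : Prop :=
  ∃ L ∈ C, L.holds M ξ

inductive Occurs {V F : Type} (x : V) : Tm V F → Prop
  | var : Occurs x (.var x)
  | app {f ts t} : t ∈ ts → Occurs x t → Occurs x (.app f ts)

inductive Subterm {V F : Type} : Tm V F → Tm V F → Prop
  | mem {t f ts} : t ∈ ts → Subterm t (.app f ts)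
  | step {t s f ts} : Subterm t s → s ∈ ts → Subterm t (.app f ts)

def Tm.size {V F : Type} : Tm V F → Nat
  | .var _ => 1
  | .app _ ts => 1 + (ts.attach.map fun t => t.1.size).sum
decreasing_by have := List.sizeOf_lt_of_mem t.2; simp [Tm.app.sizeOf_spec]; omega

def MulLt {α : Type} (lt : α → α → Prop) (N M : Multiset α) : Prop :=
  ∃ X Y Z : Multiset α, X ≠ 0 ∧ M = Z + X ∧ N = Z + Y ∧ ∀ y ∈ Y, ∃ x ∈ X, lt y x

/-!
Instantiate the premise at the valuation `ξ[x ↦ ⟦t⟧ξ]`. By the substitution lemma, `C'σ` holds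
under `ξ` exactly when `C'` holds under this valuation; and since `x` does not occur in `t`, the
literal `x ≉ t` is false under it.
-/

theorem Tm.subst_app {V W F : Type} (σ : V → Tm W F) (f : F) (ts : List (Tm V F)) :
    (Tm.app f ts).subst σ = .app f (ts.map (·.subst σ)) := by
  rw [Tm.subst, List.map_attach_eq_pmap, List.pmap_eq_map]

theorem Tm.eval_app {V F : Type} (M : Interp F) (ξ : V → M.U) (f : F) (ts : List (Tm V F)) :
    (Tm.app f ts).eval M ξ = M.fn f (ts.map (·.eval M ξ)) := by
  rw [Tm.eval, List.map_attach_eq_pmap, List.pmap_eq_map]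

theorem Tm.eval_subst {V W F : Type} (M : Interp F) (σ : V → Tm W F) (ξ : W → M.U) :
    ∀ u : Tm V F, (u.subst σ).eval M ξ = u.eval M (fun y => (σ y).eval M ξ)
  | .var y => by rw [Tm.subst, Tm.eval]
  | .app f ts => by
      rw [Tm.subst_app, Tm.eval_app, Tm.eval_app, List.map_map]
      exact congrArg _ (List.map_congr_left fun u hu => Tm.eval_subst M σ ξ u)
decreasing_by have := List.sizeOf_lt_of_mem hu; simp [Tm.app.sizeOf_spec]; omega

theorem Tm.eval_congr {V F : Type} (M : Interp F) {ξ ξ' : V → M.U} :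
    ∀ u : Tm V F, (∀ y, Occurs y u → ξ y = ξ' y) → u.eval M ξ = u.eval M ξ'
  | .var y, h => by rw [Tm.eval, Tm.eval]; exact h y .var
  | .app f ts, h => by
      rw [Tm.eval_app, Tm.eval_app]
      exact congrArg _ (List.map_congr_left fun u hu =>
        Tm.eval_congr M u fun y hy => h y (.app hu hy))
decreasing_by have := List.sizeOf_lt_of_mem hu; simp [Tm.app.sizeOf_spec]; omega

theorem Tm.eval_update_of_not_occurs {V F : Type} [DecidableEq V] (M : Interp F)
    (ξ : V → M.U) {x : V} {u : Tm V F} (hx : ¬ Occurs x u) (a : M.U) :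
    u.eval M (Function.update ξ x a) = u.eval M ξ :=
  Tm.eval_congr M u fun y hy => Function.update_of_ne (fun hyx : y = x => hx (hyx ▸ hy)) a ξ

theorem Lit.holds_subst {V W F : Type} (M : Interp F) (σ : V → Tm W F) (ξ : W → M.U)
    (L : Lit V F) : (L.subst σ).holds M ξ ↔ L.holds M (fun y => (σ y).eval M ξ) := by
  simp only [Lit.holds, Lit.subst, Tm.eval_subst]

theorem Tm.eval_comp_subst_single {V F : Type} [DecidableEq V] (M : Interp F) (ξ : V → M.U)
    (x : V) (t : Tm V F) :
    (fun y => (if y = x then t else Tm.var y).eval M ξ) = Function.update ξ x (t.eval M ξ) := by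
  funext y
  by_cases hy : y = x
  · subst hy; simp
  · simp [hy, Tm.eval]

theorem stmt_18 {V F : Type} [DecidableEq V] (x : V) (t : Tm V F)
    (hocc : ¬ Occurs x t) (C' : Clause V F) (M : Interp F)
    (h : ∀ ξ : V → M.U, Clause.holds M ξ (C' ++ [⟨false, Tm.var x, t⟩])) :
    ∀ ξ : V → M.U,
      Clause.holds M ξ
        (C'.map (Lit.subst fun y => if y = x then t else Tm.var y)) := by
  intro ξ
  obtain ⟨L, hL, hLξ⟩ := h (Function.update ξ x (t.eval M ξ))
  rcases List.mem_append.1 hL with hC' | hbind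
  · refine ⟨_, List.mem_map_of_mem hC', ?_⟩
    rwa [Lit.holds_subst, Tm.eval_comp_subst_single]
  · obtain rfl := List.mem_singleton.1 hbind
    refine absurd ?_ hLξ
    simp only [Tm.eval, Function.update_self, Tm.eval_update_of_not_occurs M ξ hocc]
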